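/- A Lagerberg form ω ∈ Λ^{p,p}V' is a positive Lagerberg form if and only if ι(ω) ∈ Λ^{p,p}V* is a positive complex form. -/

import Mathlib

/- Setup: `V = ℝⁿ` with its standard basis, `V_ℂ` its complexification,
`V* = Hom_ℝ(V,ℂ)` and `V̄*` the antilinear maps `V_ℂ → ℂ`.  The bigraded exterior algebra
`Λ^{·,·}V* = Λ_ℂ(V* ⊕ V̄*)` is modeled as the exterior algebra over `ℂ` of the free
complex module on the `2n` generators `du_1,…,du_n` (first summand) and
`dū_1,…,dū_n` (second summand). -/

noncomputable section
open ExteriorAlgebra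

/-- The algebra `Λ^{·,·}V* = Λ_ℂ(V* ⊕ V̄*)` for `V = ℝⁿ`. -/
abbrev CForms (n : ℕ) : Type := ExteriorAlgebra ℂ ((Fin n ⊕ Fin n) → ℂ)

/-- The basis element `du_i` of `V*`. -/
def cdu {n : ℕ} (i : Fin n) : CForms n := ExteriorAlgebra.ι ℂ (Pi.single (Sum.inl i) (1 : ℂ))

/-- The basis element `dū_i` of `V̄*`. -/
def cdub {n : ℕ} (i : Fin n) : CForms n := ExteriorAlgebra.ι ℂ (Pi.single (Sum.inr i) (1 : ℂ))

/-- A general element `Σ cᵢ • du_i` of `V*`. -/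
def cOne {n : ℕ} (c : Fin n → ℂ) : CForms n := ∑ i, c i • cdu i

/-- A general element `Σ cᵢ • dū_i` of `V̄*`. -/
def cOneBar {n : ℕ} (c : Fin n → ℂ) : CForms n := ∑ i, c i • cdub i

/-- The conjugate `ᾱ = Σ c̄ᵢ • dū_i ∈ V̄*` of the one-form `α = Σ cᵢ • du_i ∈ V*`. -/
def cConjOne {n : ℕ} (c : Fin n → ℂ) : CForms n := ∑ i, (starRingEnd ℂ) (c i) • cdub i

/-- A decomposable `(p,0)`-form `α₁ ∧ … ∧ α_p` with `α_j ∈ V*`. -/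
def cDecomp {n p : ℕ} (c : Fin p → Fin n → ℂ) : CForms n := (List.ofFn fun j => cOne (c j)).prod

/-- The conjugate `ᾱ₁ ∧ … ∧ ᾱ_p` of the decomposable `(p,0)`-form given by `c`. -/
def cDecompBar {n p : ℕ} (c : Fin p → Fin n → ℂ) : CForms n :=
  (List.ofFn fun j => cConjOne (c j)).prod

/-- `Λ^{p,q}V*`: the span of products of `p` elements of `V*` and `q` elements of `V̄*`. -/
def CFormsPQ (n p q : ℕ) : Submodule ℂ (CForms n) :=
  Submodule.span ℂ { x | ∃ (a : Fin p → Fin n → ℂ) (b : Fin q → Fin n → ℂ),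
    x = cDecomp a * (List.ofFn fun j => cOneBar (b j)).prod }

/-- The convex cone generated by a set `S` (nonnegative real coefficients). -/
def realCone {n : ℕ} (S : Set (CForms n)) : Set (CForms n) :=
  { x | ∃ (m : ℕ) (t : Fin m → ℝ) (y : Fin m → CForms n),
      (∀ k, 0 ≤ t k) ∧ (∀ k, y k ∈ S) ∧ x = ∑ k, (t k : ℂ) • y k }

/-- The generators `α₁ ∧ iᾱ₁ ∧ … ∧ α_p ∧ iᾱ_p` (`α_j ∈ V*`) of the strongly positive cone. -/
def cStrongGen (n p : ℕ) : Set (CForms n) :=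
  { x | ∃ c : Fin p → Fin n → ℂ,
      x = (List.ofFn fun j => cOne (c j) * (Complex.I • cConjOne (c j))).prod }

/-- The cone `Λ^{p,p}_{+,s}V*` of strongly positive `(p,p)`-forms. -/
def cStrongPos (n p : ℕ) : Set (CForms n) := realCone (cStrongGen n p)

/-- The generators `i^{p²} α ∧ ᾱ` (`α ∈ Λ^{p,0}V*`, written as a sum of decomposables)
of the positive cone. -/
def cPosGen (n p : ℕ) : Set (CForms n) :=
  { x | ∃ (m : ℕ) (c : Fin m → Fin p → Fin n → ℂ),
      x = Complex.I ^ (p ^ 2) • ((∑ l, cDecomp (c l)) * (∑ l, cDecompBar (c l))) }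

/-- The cone `Λ^{p,p}_{+}V*` of positive `(p,p)`-forms. -/
def cPos (n p : ℕ) : Set (CForms n) := realCone (cPosGen n p)

/-- The canonical orientation form `ω_n = du_1 ∧ i dū_1 ∧ … ∧ du_n ∧ i dū_n`. -/
def cOmegaTop (n : ℕ) : CForms n := (List.ofFn fun i : Fin n => cdu i * (Complex.I • cdub i)).prod

/-- The set `Λ^{p,p}_{+,w}V*` of weakly positive `(p,p)`-forms: `(p,p)`-forms `ω` such that
for every strongly positive `η` of type `(n-p,n-p)` there is a real `γ ≥ 0` with
`ω ∧ η = γ ω_n`. -/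
def cWeakPos (n p : ℕ) : Set (CForms n) :=
  { x | x ∈ CFormsPQ n p p ∧
      ∀ η ∈ cStrongPos n (n - p), ∃ γ : ℝ, 0 ≤ γ ∧ x * η = (γ : ℂ) • cOmegaTop n }

/-- `σ` is the complex conjugation of `Λ^{·,·}V*`: the (unique) antilinear multiplicative
involution of the ℝ-algebra `Λ^{·,·}V*` with `σ(du_i) = dū_i` and `σ(dū_i) = du_i`. -/
structure IsConjugation (n : ℕ) (σ : CForms n → CForms n) : Prop where
  map_add : ∀ x y, σ (x + y) = σ x + σ y
  map_smul : ∀ (c : ℂ) (x), σ (c • x) = (starRingEnd ℂ) c • σ x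
  map_mul : ∀ x y, σ (x * y) = σ x * σ y
  map_one : σ 1 = 1
  map_du : ∀ i : Fin n, σ (cdu i) = cdub i
  map_dub : ∀ i : Fin n, σ (cdub i) = cdu i

/-- `F` is the antilinear involution of the ℝ-algebra `Λ^{·,·}V*` determined by
`F(λ) = λ̄`, `F(du_i) = du_i` and `F(dū_i) = -dū_i`. -/
structure IsFInvolution (n : ℕ) (F : CForms n → CForms n) : Prop where
  map_add : ∀ x y, F (x + y) = F x + F y
  map_smul : ∀ (c : ℂ) (x), F (c • x) = (starRingEnd ℂ) c • F x
  map_mul : ∀ x y, F (x * y) = F x * F y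
  map_one : F 1 = 1
  map_du : ∀ i : Fin n, F (cdu i) = cdu i
  map_dub : ∀ i : Fin n, F (cdub i) = - cdub i

/-- The algebra `Λ^{·,·}V' = Λ_ℝ(V' ⊕ V'')` of Lagerberg forms for `V = ℝⁿ`. -/
abbrev LForms (n : ℕ) : Type := ExteriorAlgebra ℝ ((Fin n ⊕ Fin n) → ℝ)

/-- The basis element `d'u_i` of `V'`. -/
def ldu {n : ℕ} (i : Fin n) : LForms n := ExteriorAlgebra.ι ℝ (Pi.single (Sum.inl i) (1 : ℝ))

/-- The basis element `d''u_i` of `V''`. -/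
def lddu {n : ℕ} (i : Fin n) : LForms n := ExteriorAlgebra.ι ℝ (Pi.single (Sum.inr i) (1 : ℝ))

/-- A general element `Σ cᵢ • d'u_i` of `V'`. -/
def lOne {n : ℕ} (c : Fin n → ℝ) : LForms n := ∑ i, c i • ldu i

/-- A general element `Σ cᵢ • d''u_i` of `V''`; note `J(Σ cᵢ d'u_i) = Σ cᵢ d''u_i`. -/
def lOne'' {n : ℕ} (c : Fin n → ℝ) : LForms n := ∑ i, c i • lddu i

/-- A decomposable `(p,0)`-form `α₁ ∧ … ∧ α_p` with `α_j ∈ V'`. -/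
def lDecomp {n p : ℕ} (c : Fin p → Fin n → ℝ) : LForms n := (List.ofFn fun j => lOne (c j)).prod

/-- Its image `J(α₁) ∧ … ∧ J(α_p)` under the Lagerberg involution. -/
def lDecomp'' {n p : ℕ} (c : Fin p → Fin n → ℝ) : LForms n :=
  (List.ofFn fun j => lOne'' (c j)).prod

/-- `Λ^{p,q}V'`: the span of products of `p` elements of `V'` and `q` elements of `V''`. -/
def LFormsPQ (n p q : ℕ) : Submodule ℝ (LForms n) :=
  Submodule.span ℝ { x | ∃ (a : Fin p → Fin n → ℝ) (b : Fin q → Fin n → ℝ),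
    x = lDecomp a * lDecomp'' b }

/-- The convex cone generated by a set `S` (nonnegative real coefficients). -/
def lCone {n : ℕ} (S : Set (LForms n)) : Set (LForms n) :=
  { x | ∃ (m : ℕ) (t : Fin m → ℝ) (y : Fin m → LForms n),
      (∀ k, 0 ≤ t k) ∧ (∀ k, y k ∈ S) ∧ x = ∑ k, t k • y k }

/-- The generators `α₁ ∧ J(α₁) ∧ … ∧ α_p ∧ J(α_p)` (`α_j ∈ V'`) of the strongly positive
cone. -/
def lStrongGen (n p : ℕ) : Set (LForms n) :=
  { x | ∃ c : Fin p → Fin n → ℝ, x = (List.ofFn fun j => lOne (c j) * lOne'' (c j)).prod }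

/-- The cone `Λ^{p,p}_{+,s}V'` of strongly positive Lagerberg `(p,p)`-forms. -/
def lStrongPos (n p : ℕ) : Set (LForms n) := lCone (lStrongGen n p)

/-- The generators `(-1)^{p(p-1)/2} α ∧ J(α)` (`α ∈ Λ^{p,0}V'`, written as a sum of
decomposables) of the positive cone. -/
def lPosGen (n p : ℕ) : Set (LForms n) :=
  { x | ∃ (m : ℕ) (c : Fin m → Fin p → Fin n → ℝ),
      x = ((-1 : ℝ)) ^ (p * (p - 1) / 2) • ((∑ l, lDecomp (c l)) * (∑ l, lDecomp'' (c l))) }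

/-- The cone `Λ^{p,p}_{+}V'` of positive Lagerberg `(p,p)`-forms. -/
def lPos (n p : ℕ) : Set (LForms n) := lCone (lPosGen n p)

/-- The Lagerberg orientation form `τ_n = d'u_1 ∧ d''u_1 ∧ … ∧ d'u_n ∧ d''u_n`. -/
def lTauTop (n : ℕ) : LForms n := (List.ofFn fun i : Fin n => ldu i * lddu i).prod

/-- `J` is the Lagerberg involution: the (unique) ℝ-algebra automorphism of `Λ^{·,·}V'`
with `J(d'u_i) = d''u_i` and `J(d''u_i) = d'u_i`. -/
structure IsLagerbergJ (n : ℕ) (J : LForms n → LForms n) : Prop where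
  map_add : ∀ x y, J (x + y) = J x + J y
  map_smul : ∀ (c : ℝ) (x), J (c • x) = c • J x
  map_mul : ∀ x y, J (x * y) = J x * J y
  map_one : J 1 = 1
  map_du : ∀ i : Fin n, J (ldu i) = lddu i
  map_ddu : ∀ i : Fin n, J (lddu i) = ldu i

/-- The set `Λ^{p,p}_{sym}V'` of symmetric Lagerberg `(p,p)`-forms:
those with `J(ω) = (-1)^p ω`. -/
def lSym (n p : ℕ) (J : LForms n → LForms n) : Set (LForms n) :=
  { x | x ∈ LFormsPQ n p p ∧ J x = ((-1 : ℝ)) ^ p • x }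

/-- The set `Λ^{p,p}_{+,w}V'` of weakly positive Lagerberg `(p,p)`-forms: symmetric
`(p,p)`-forms `ω` such that for every strongly positive `η` of type `(n-p,n-p)` there is a
real `γ ≥ 0` with `ω ∧ η = γ τ_n`. -/
def lWeakPos (n p : ℕ) (J : LForms n → LForms n) : Set (LForms n) :=
  { x | x ∈ lSym n p J ∧
      ∀ η ∈ lStrongPos n (n - p), ∃ γ : ℝ, 0 ≤ γ ∧ x * η = γ • lTauTop n }

/-- `ι` is the canonical embedding `Λ^{·,·}V' → Λ^{·,·}V*`: the (unique) ℝ-algebra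
homomorphism with `ι(d'u_j) = du_j` and `ι(d''u_j) = i dū_j`.  Its image is the set of
`F`-invariant complex forms. -/
structure IsIota (n : ℕ) (ι : LForms n → CForms n) : Prop where
  map_add : ∀ x y, ι (x + y) = ι x + ι y
  map_smul : ∀ (c : ℝ) (x), ι (c • x) = (c : ℂ) • ι x
  map_mul : ∀ x y, ι (x * y) = ι x * ι y
  map_one : ι 1 = 1
  map_du : ∀ i : Fin n, ι (ldu i) = cdu i
  map_ddu : ∀ i : Fin n, ι (lddu i) = Complex.I • cdub i

/-!
The map `Ψ : Λ^{·,·}V* → ℂ ⊗_ℝ Λ^{·,·}V'`, `du_i ↦ 1 ⊗ d'u_i`, `dū_i ↦ -i ⊗ d''u_i`, satisfies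
`Ψ ∘ ι = 1 ⊗ -`, so `ω` is the real part of `Ψ(ι ω)`. If `α = Σ_l α_l` is a sum of decomposable
`(p,0)`-forms, then `Ψ α = A + iB` with real `A, B ∈ Λ^{p,0}V'`, and `Ψ ᾱ = (-i)^p (J A - i J B)`.
Since `i^{p²} (-i)^p = (-1)^{p(p-1)/2}`, the real part of `Ψ(i^{p²} α ∧ ᾱ)` is the sum of the
positive Lagerberg forms `(-1)^{p(p-1)/2} A ∧ J A` and `(-1)^{p(p-1)/2} B ∧ J B`; so `ι ω` positive
forces `ω` positive. Conversely, `ι` maps the Lagerberg generator of `α = Σ_l α_l` (real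
coefficients) to the complex generator `i^{p²} α ∧ ᾱ`, by the same sign identity.
-/

open scoped TensorProduct
open Complex

section ComplexTensor

variable {M : Type*} [AddCommGroup M] [Module ℝ M]

def reTensor : ℂ ⊗[ℝ] M →ₗ[ℝ] M := TensorProduct.lid ℝ M ∘ₗ reLm.rTensor M

def imTensor : ℂ ⊗[ℝ] M →ₗ[ℝ] M := TensorProduct.lid ℝ M ∘ₗ imLm.rTensor M

@[simp] lemma reTensor_tmul (z : ℂ) (m : M) : reTensor (z ⊗ₜ m) = z.re • m := rfl

@[simp] lemma imTensor_tmul (z : ℂ) (m : M) : imTensor (z ⊗ₜ m) = z.im • m := rfl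

lemma one_tmul_reTensor_add_I_tmul_imTensor (x : ℂ ⊗[ℝ] M) :
    1 ⊗ₜ reTensor x + I ⊗ₜ imTensor x = x := by
  induction x using TensorProduct.induction_on with
  | zero => simp
  | tmul z m =>
    rw [reTensor_tmul, imTensor_tmul, TensorProduct.tmul_smul, TensorProduct.tmul_smul,
      TensorProduct.smul_tmul', TensorProduct.smul_tmul', ← TensorProduct.add_tmul]
    congr 1
    apply Complex.ext <;> simp
  | add x y hx hy =>
    rw [map_add, map_add, TensorProduct.tmul_add, TensorProduct.tmul_add,
      add_add_add_comm, hx, hy]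

variable {P : Submodule ℝ M} {x : ℂ ⊗[ℝ] M}

lemma reTensor_mem_of_mem_baseChange (hx : x ∈ P.baseChange ℂ) : reTensor x ∈ P := by
  obtain ⟨y, rfl⟩ := hx
  induction y using TensorProduct.induction_on with
  | zero => simp
  | tmul z m => simpa using P.smul_mem z.re m.2
  | add x y hx hy => simpa using P.add_mem hx hy

lemma imTensor_mem_of_mem_baseChange (hx : x ∈ P.baseChange ℂ) : imTensor x ∈ P := by
  obtain ⟨y, rfl⟩ := hx
  induction y using TensorProduct.induction_on with
  | zero => simp
  | tmul z m => simpa using P.smul_mem z.im m.2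
  | add x y hx hy => simpa using P.add_mem hx hy

lemma ExteriorAlgebra.baseChange_ι_mul_self (w : ℂ ⊗[ℝ] M) :
    (ι ℝ (M := M)).baseChange ℂ w * (ι ℝ (M := M)).baseChange ℂ w = 0 := by
  rw [← one_tmul_reTensor_add_I_tmul_imTensor w]
  simp only [map_add, LinearMap.baseChange_tmul, add_mul, mul_add,
    Algebra.TensorProduct.tmul_mul_tmul, ι_sq_zero, TensorProduct.tmul_zero]
  rw [zero_add, add_zero, mul_one, one_mul, ← TensorProduct.tmul_add, ι_add_mul_swap,
    TensorProduct.tmul_zero]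

end ComplexTensor

lemma Submodule.mul_mem_baseChange_mul {R A B : Type*} [CommSemiring R] [Semiring A]
    [Algebra R A] [Semiring B] [Algebra R B] {P Q : Submodule R B} {x y : A ⊗[R] B}
    (hx : x ∈ P.baseChange A) (hy : y ∈ Q.baseChange A) : x * y ∈ (P * Q).baseChange A := by
  obtain ⟨x, rfl⟩ := hx
  obtain ⟨y, rfl⟩ := hy
  induction x using TensorProduct.induction_on with
  | zero => simp
  | tmul a p =>
    induction y using TensorProduct.induction_on with
    | zero => simp
    | tmul b q => simpa using tmul_mem_baseChange_of_mem (a * b) (mul_mem_mul p.2 q.2)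
    | add y y' hy hy' => simpa [mul_add] using add_mem hy hy'
  | add x x' hx hx' => simpa [add_mul] using add_mem hx hx'

lemma List.prod_ofFn_smul {M A : Type*} [Monoid M] [Monoid A] [MulAction M A]
    [IsScalarTower M A A] [SMulCommClass M A A] (c : M) :
    ∀ {p : ℕ} (f : Fin p → A), (ofFn fun j => c • f j).prod = c ^ p • (ofFn f).prod
  | 0, _ => by simp
  | _ + 1, f => by
    rw [ofFn_succ, ofFn_succ, prod_cons, prod_cons, List.prod_ofFn_smul, smul_mul_smul_comm,
      pow_succ']

section Forms

variable {n p : ℕ}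

lemma mem_lCone_iff {S : Set (LForms n)} {x : LForms n} :
    x ∈ lCone S ↔ x ∈ PointedCone.hull ℝ S := by
  rw [Submodule.mem_span_set']
  constructor
  · rintro ⟨m, t, y, ht, hy, rfl⟩
    exact ⟨m, fun k => ⟨t k, ht k⟩, fun k => ⟨y k, hy k⟩, rfl⟩
  · rintro ⟨m, t, y, rfl⟩
    exact ⟨m, fun k => t k, fun k => y k, fun k => (t k).2, fun k => (y k).2, rfl⟩

def lagerbergJ (n : ℕ) : LForms n →ₐ[ℝ] LForms n :=
  ExteriorAlgebra.map (LinearMap.funLeft ℝ ℝ Sum.swap)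

lemma lagerbergJ_ldu (i : Fin n) : lagerbergJ n (ldu i) = lddu i := by
  simp only [lagerbergJ, ldu, lddu, ExteriorAlgebra.map_apply_ι]
  congr 1
  ext (j | j) <;> simp [Pi.single_apply]

lemma lagerbergJ_lOne (r : Fin n → ℝ) : lagerbergJ n (lOne r) = lOne'' r := by
  simp [lOne, lOne'', lagerbergJ_ldu]

lemma lagerbergJ_lDecomp (b : Fin p → Fin n → ℝ) : lagerbergJ n (lDecomp b) = lDecomp'' b := by
  simp [lDecomp, lDecomp'', map_list_prod, List.map_ofFn, Function.comp_def, lagerbergJ_lOne]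

lemma lOne_smul (c : ℝ) (r : Fin n → ℝ) : lOne (c • r) = c • lOne r := by
  simp [lOne, Finset.smul_sum, smul_smul]

lemma lDecomp_cons (r : Fin n → ℝ) (b : Fin p → Fin n → ℝ) :
    lDecomp (Fin.cons r b : Fin (p + 1) → Fin n → ℝ) = lOne r * lDecomp b := by
  simp [lDecomp, List.ofFn_succ]

lemma smul_lDecomp (c : ℝ) (b : Fin (p + 1) → Fin n → ℝ) :
    c • lDecomp b = lDecomp (Fin.cons (c • b 0) (Fin.tail b)) := by
  rw [lDecomp_cons, lOne_smul, smul_mul_assoc, ← lDecomp_cons, Fin.cons_self_tail]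

/-- `Λ^{p,0}V'`. -/
def LFormsP0 (n p : ℕ) : Submodule ℝ (LForms n) := Submodule.span ℝ (Set.range (lDecomp (p := p)))

lemma span_range_lOne_mul_LFormsP0_le :
    Submodule.span ℝ (Set.range (lOne (n := n))) * LFormsP0 n p ≤ LFormsP0 n (p + 1) := by
  rw [LFormsP0, LFormsP0, Submodule.span_mul_span, Submodule.span_le]
  rintro _ ⟨_, ⟨r, rfl⟩, _, ⟨b, rfl⟩, rfl⟩
  exact Submodule.subset_span ⟨Fin.cons r b, lDecomp_cons r b⟩

lemma exists_eq_sum_lDecomp_of_mem_LFormsP0 {A : LForms n} (hA : A ∈ LFormsP0 n (p + 1)) :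
    ∃ (m : ℕ) (b : Fin m → Fin (p + 1) → Fin n → ℝ), A = ∑ l, lDecomp (b l) := by
  induction hA using Submodule.span_induction with
  | mem _ h =>
    obtain ⟨b, rfl⟩ := h
    exact ⟨1, fun _ => b, by simp⟩
  | zero => exact ⟨0, Fin.elim0, by simp⟩
  | add _ _ _ _ h₁ h₂ =>
    obtain ⟨m₁, b₁, rfl⟩ := h₁
    obtain ⟨m₂, b₂, rfl⟩ := h₂
    exact ⟨m₁ + m₂, Fin.append b₁ b₂, by simp [Fin.sum_univ_add]⟩
  | smul c _ _ h =>
    obtain ⟨m, b, rfl⟩ := h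
    exact ⟨m, fun l => Fin.cons (c • b l 0) (Fin.tail (b l)),
      by simp [Finset.smul_sum, smul_lDecomp]⟩

lemma smul_mul_lagerbergJ_mem_lPos {A : LForms n} (hA : A ∈ LFormsP0 n p) :
    (-1 : ℝ) ^ (p * (p - 1) / 2) • (A * lagerbergJ n A) ∈ lPos n p := by
  rw [lPos, mem_lCone_iff]
  cases p with
  | zero =>
    rw [LFormsP0, Set.range_unique, Submodule.mem_span_singleton] at hA
    obtain ⟨c, rfl⟩ := hA
    have hgen : (1 : LForms n) ∈ lPosGen n 0 := ⟨1, 0, by simp [lDecomp, lDecomp'']⟩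
    simpa [lDecomp, smul_smul] using
      PointedCone.smul_mem _ (mul_self_nonneg c) (PointedCone.subset_hull hgen)
  | succ q =>
    obtain ⟨m, b, rfl⟩ := exists_eq_sum_lDecomp_of_mem_LFormsP0 hA
    exact PointedCone.subset_hull ⟨m, b, by simp [lagerbergJ_lDecomp]⟩

lemma I_pow_sq (p : ℕ) : I ^ (p ^ 2) = ((-1 : ℝ) ^ (p * (p - 1) / 2) : ℝ) * I ^ p := by
  have h : p ^ 2 = 2 * (p * (p - 1) / 2) + p := by
    rw [Nat.two_mul_div_two_of_even (Nat.even_mul_pred_self p)]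
    cases p <;> simp [sq]
    ring
  rw [h, pow_add, pow_mul, I_sq]
  push_cast
  rfl

/-- The map `Ψ`; its coefficient `-i` on `dū_i` undoes the `i` in `ι(d''u_j) = i dū_j`. -/
def cFormsToTensor (n : ℕ) : CForms n →ₐ[ℂ] ℂ ⊗[ℝ] LForms n :=
  ExteriorAlgebra.lift ℂ ⟨(ExteriorAlgebra.ι ℝ (M := Fin n ⊕ Fin n → ℝ)).baseChange ℂ ∘ₗ
      (TensorProduct.piScalarRight ℝ ℂ ℂ _).symm.toLinearMap ∘ₗ
      LinearMap.mulLeft ℂ (Sum.elim 1 fun _ => -I),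
    fun _ => ExteriorAlgebra.baseChange_ι_mul_self _⟩

lemma cFormsToTensor_cdu (i : Fin n) : cFormsToTensor n (cdu i) = 1 ⊗ₜ ldu i := by
  simp [cFormsToTensor, cdu, ldu, ← Pi.single_mul_right]

lemma cFormsToTensor_cdub (i : Fin n) : cFormsToTensor n (cdub i) = (-I) ⊗ₜ lddu i := by
  simp [cFormsToTensor, cdub, lddu, ← Pi.single_mul_right]

lemma cFormsToTensor_cOne (c : Fin n → ℂ) : cFormsToTensor n (cOne c) = ∑ i, c i ⊗ₜ ldu i := by
  simp [cOne, cFormsToTensor_cdu, TensorProduct.smul_tmul']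

lemma cFormsToTensor_cOne_mem (c : Fin n → ℂ) :
    cFormsToTensor n (cOne c) ∈ (Submodule.span ℝ (Set.range (lOne (n := n)))).baseChange ℂ := by
  rw [cFormsToTensor_cOne]
  refine Submodule.sum_mem _ fun i _ => Submodule.tmul_mem_baseChange_of_mem _ ?_
  exact Submodule.subset_span ⟨Pi.single i 1, by simp [lOne, Pi.single_apply]⟩

lemma cFormsToTensor_cDecomp_mem : ∀ {p : ℕ} (c : Fin p → Fin n → ℂ),
    cFormsToTensor n (cDecomp c) ∈ (LFormsP0 n p).baseChange ℂ
  | 0, c => by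
    rw [cDecomp, List.ofFn_zero, List.prod_nil, map_one, Algebra.TensorProduct.one_def]
    exact Submodule.tmul_mem_baseChange_of_mem 1 (Submodule.subset_span ⟨0, by simp [lDecomp]⟩)
  | p + 1, c => by
    rw [cDecomp, List.ofFn_succ, List.prod_cons, map_mul]
    exact Submodule.baseChange_mono ℂ span_range_lOne_mul_LFormsP0_le
      (Submodule.mul_mem_baseChange_mul (cFormsToTensor_cOne_mem _)
        (cFormsToTensor_cDecomp_mem fun j => c j.succ))

def conjLagerbergJ (n : ℕ) : ℂ ⊗[ℝ] LForms n →ₐ[ℝ] ℂ ⊗[ℝ] LForms n :=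
  Algebra.TensorProduct.map conjAe.toAlgHom (lagerbergJ n)

@[simp] lemma conjLagerbergJ_tmul (z : ℂ) (x : LForms n) :
    conjLagerbergJ n (z ⊗ₜ x) = starRingEnd ℂ z ⊗ₜ lagerbergJ n x := rfl

lemma reTensor_mul_conjLagerbergJ (x : ℂ ⊗[ℝ] LForms n) :
    reTensor (x * conjLagerbergJ n x) = reTensor x * lagerbergJ n (reTensor x)
      + imTensor x * lagerbergJ n (imTensor x) := by
  conv_lhs => rw [← one_tmul_reTensor_add_I_tmul_imTensor x]
  simp [add_mul, mul_add]

lemma cFormsToTensor_cConjOne (c : Fin n → ℂ) :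
    cFormsToTensor n (cConjOne c) = (-I) • conjLagerbergJ n (cFormsToTensor n (cOne c)) := by
  simp [cConjOne, cFormsToTensor_cOne, cFormsToTensor_cdub, lagerbergJ_ldu, Finset.smul_sum,
    TensorProduct.smul_tmul', mul_comm, TensorProduct.neg_tmul]

lemma cFormsToTensor_cDecompBar (c : Fin p → Fin n → ℂ) :
    cFormsToTensor n (cDecompBar c) =
      (-I) ^ p • conjLagerbergJ n (cFormsToTensor n (cDecomp c)) := by
  simp only [cDecompBar, cDecomp, map_list_prod, List.map_ofFn, Function.comp_def,
    cFormsToTensor_cConjOne]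
  rw [List.prod_ofFn_smul]

lemma reTensor_cFormsToTensor_mem_lPos {y : CForms n} (hy : y ∈ cPosGen n p) :
    reTensor (cFormsToTensor n y) ∈ lPos n p := by
  obtain ⟨m, c, rfl⟩ := hy
  set X := cFormsToTensor n (∑ l, cDecomp (c l))
  have hX : X ∈ (LFormsP0 n p).baseChange ℂ := by
    simpa only [X, map_sum] using Submodule.sum_mem _ fun l _ => cFormsToTensor_cDecomp_mem (c l)
  have hbar : cFormsToTensor n (∑ l, cDecompBar (c l)) = (-I) ^ p • conjLagerbergJ n X := by
    simp [X, cFormsToTensor_cDecompBar, Finset.smul_sum]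
  have hsign : cFormsToTensor n (I ^ (p ^ 2) • ((∑ l, cDecomp (c l)) * ∑ l, cDecompBar (c l)))
      = (-1 : ℝ) ^ (p * (p - 1) / 2) • (X * conjLagerbergJ n X) := by
    rw [map_smul, map_mul, hbar, mul_smul_comm, smul_smul, I_pow_sq, mul_assoc, ← mul_pow,
      mul_neg, I_mul_I, neg_neg, one_pow, mul_one]
    rfl
  rw [hsign, map_smul, reTensor_mul_conjLagerbergJ, smul_add, lPos, mem_lCone_iff]
  exact add_mem
    (mem_lCone_iff.1 (smul_mul_lagerbergJ_mem_lPos (reTensor_mem_of_mem_baseChange hX)))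
    (mem_lCone_iff.1 (smul_mul_lagerbergJ_mem_lPos (imTensor_mem_of_mem_baseChange hX)))

@[simps]
def IsIota.toAlgHom {ι : LForms n → CForms n} (hι : IsIota n ι) :
    LForms n →ₐ[ℝ] CForms n where
  toFun := ι
  map_one' := hι.map_one
  map_mul' := hι.map_mul
  map_zero' := by simpa using hι.map_smul 0 0
  map_add' := hι.map_add
  commutes' r := by simpa [Algebra.algebraMap_eq_smul_one, hι.map_one] using hι.map_smul r 1

section Iota

variable {ι : LForms n → CForms n} (hι : IsIota n ι)
include hι

lemma IsIota.map_sum {m : ℕ} (f : Fin m → LForms n) : ι (∑ l, f l) = ∑ l, ι (f l) :=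
  _root_.map_sum hι.toAlgHom f _

lemma IsIota.map_lOne (r : Fin n → ℝ) : ι (lOne r) = cOne fun i => (r i : ℂ) := by
  rw [lOne, cOne, hι.map_sum]
  refine Finset.sum_congr rfl fun i _ => ?_
  rw [hι.map_smul, hι.map_du]

lemma IsIota.map_lOne'' (r : Fin n → ℝ) : ι (lOne'' r) = I • cConjOne fun i => (r i : ℂ) := by
  rw [lOne'', cConjOne, hι.map_sum, Finset.smul_sum]
  refine Finset.sum_congr rfl fun i _ => ?_
  rw [hι.map_smul, hι.map_ddu, conj_ofReal, smul_comm]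

lemma IsIota.map_lDecomp (b : Fin p → Fin n → ℝ) :
    ι (lDecomp b) = cDecomp fun j i => (b j i : ℂ) := by
  rw [lDecomp, ← hι.toAlgHom_apply, map_list_prod, List.map_ofFn]
  simp [Function.comp_def, hι.map_lOne, cDecomp]

lemma IsIota.map_lDecomp'' (b : Fin p → Fin n → ℝ) :
    ι (lDecomp'' b) = I ^ p • cDecompBar fun j i => (b j i : ℂ) := by
  rw [lDecomp'', ← hι.toAlgHom_apply, map_list_prod, List.map_ofFn]
  simp [Function.comp_def, hι.map_lOne'', cDecompBar, List.prod_ofFn_smul]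

lemma IsIota.mem_cPosGen {x : LForms n} (hx : x ∈ lPosGen n p) : ι x ∈ cPosGen n p := by
  obtain ⟨m, b, rfl⟩ := hx
  refine ⟨m, fun l j i => (b l j i : ℂ), ?_⟩
  rw [hι.map_smul, hι.map_mul, hι.map_sum, hι.map_sum]
  simp only [hι.map_lDecomp, hι.map_lDecomp'', ← Finset.smul_sum, mul_smul_comm, smul_smul,
    I_pow_sq]

lemma cFormsToTensor_comp_toAlgHom :
    ((cFormsToTensor n).restrictScalars ℝ).comp hι.toAlgHom =
      Algebra.TensorProduct.includeRight := by
  refine ExteriorAlgebra.hom_ext (LinearMap.pi_ext' fun b => LinearMap.ext_ring ?_)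
  rcases b with i | i
  · show cFormsToTensor n (ι (ldu i)) = 1 ⊗ₜ ldu i
    rw [hι.map_du, cFormsToTensor_cdu]
  · show cFormsToTensor n (ι (lddu i)) = 1 ⊗ₜ lddu i
    rw [hι.map_ddu, map_smul, cFormsToTensor_cdub, TensorProduct.smul_tmul', smul_eq_mul, mul_neg,
      I_mul_I, neg_neg]

lemma reTensor_cFormsToTensor_iota (x : LForms n) : reTensor (cFormsToTensor n (ι x)) = x := by
  simpa using congrArg reTensor (DFunLike.congr_fun (cFormsToTensor_comp_toAlgHom hι) x)

end Iota

end Forms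

theorem positive_lagerberg_iff_positive_complex_general (n p : ℕ)
    (ι : LForms n → CForms n) (hι : IsIota n ι)
    (ω : LForms n) :
    ω ∈ lPos n p ↔ ι ω ∈ cPos n p := by
  constructor
  · rintro ⟨m, t, y, ht, hy, rfl⟩
    refine ⟨m, t, ι ∘ y, ht, fun k => hι.mem_cPosGen (hy k), ?_⟩
    simp [hι.map_sum, hι.map_smul]
  · rintro ⟨m, t, y, ht, hy, hsum⟩
    have hω : ω = ∑ k, t k • reTensor (cFormsToTensor n (y k)) := by
      rw [← reTensor_cFormsToTensor_iota hι ω, hsum, map_sum, map_sum]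
      refine Finset.sum_congr rfl fun k _ => ?_
      rw [map_smul]
      exact map_smul reTensor (t k) _
    rw [hω, lPos, mem_lCone_iff]
    exact sum_mem fun k _ => PointedCone.smul_mem _ (ht k)
      (mem_lCone_iff.1 (reTensor_cFormsToTensor_mem_lPos (hy k)))

/-- Proposition 2.17. A Lagerberg form `ω ∈ Λ^{p,p}V'` is a positive
Lagerberg form if and only if `ι(ω) ∈ Λ^{p,p}V*` is a positive complex form. -/
theorem positive_lagerberg_iff_positive_complex (n p : ℕ)
    (ι : LForms n → CForms n) (hι : IsIota n ι)
    (ω : LForms n) (hω : ω ∈ LFormsPQ n p p) :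
    ω ∈ lPos n p ↔ ι ω ∈ cPos n p :=
  positive_lagerberg_iff_positive_complex_general n p ι hι ω
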